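/- arXiv:2104.02090 — 6 statements merged into one kernel-verified Lean document; each statement's English description precedes it below -/
import Mathlib

section
/- Let y = (y⁰, 𝐲) ∈ ℂ^d with Re y⁰ > |Im 𝐲| (Euclidean norm of the imaginary part of the spatial vector 𝐲 ∈ ℂ^{d-1}). Then y² := (y⁰)² + 𝐲·𝐲 (complex bilinear) lies in ℂ \ (-∞, 0]; i.e., y² is not a nonpositive real number. -/
/-- If `y = (y⁰, 𝐲) ∈ ℂ^d` satisfies `Re y⁰ > |Im 𝐲|` (Euclidean norm of the
imaginary parts of the spatial components), then the complexified Euclidean square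
`y² = (y⁰)² + 𝐲·𝐲` is not a nonpositive real number. -/
theorem stmt_0 (d : ℕ) (y0 : ℂ) (yv : Fin d → ℂ)
    (h : Real.sqrt (∑ i, (yv i).im ^ 2) < y0.re) :
    ∀ r : ℝ, r ≤ 0 → y0 ^ 2 + ∑ i, (yv i) ^ 2 ≠ (r : ℂ) := by
  intro r hr heq
  set A := y0.re with hA
  set c := y0.im with hc
  set Sa := ∑ i, (yv i).re ^ 2 with hSa
  set Sb := ∑ i, (yv i).im ^ 2 with hSb
  set P := ∑ i, (yv i).re * (yv i).im with hP
  have hSa0 : 0 ≤ Sa := Finset.sum_nonneg fun i _ => sq_nonneg _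
  have hSb0 : 0 ≤ Sb := Finset.sum_nonneg fun i _ => sq_nonneg _
  have hA0 : 0 < A := lt_of_le_of_lt (Real.sqrt_nonneg _) h
  have hSbA : Sb < A ^ 2 := by
    have := pow_lt_pow_left₀ h (Real.sqrt_nonneg _) (two_ne_zero)
    rwa [Real.sq_sqrt hSb0] at this
  have hSa' : ∑ i, (yv i).re * (yv i).re = Sa := by
    simp [hSa, pow_two]
  have hSb' : ∑ i, (yv i).im * (yv i).im = Sb := by
    simp [hSb, pow_two]
  have hre : A ^ 2 - c ^ 2 + (Sa - Sb) = r := by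
    have h2 := congrArg Complex.re heq
    simp [Complex.add_re, Complex.re_sum, pow_two, Complex.mul_re,
      Finset.sum_sub_distrib, hSa', hSb'] at h2
    nlinarith [h2]
  have him : A * c + P = 0 := by
    have h2 := congrArg Complex.im heq
    simp [Complex.add_im, Complex.im_sum, pow_two, Complex.mul_im,
      Finset.sum_add_distrib, mul_comm, hP] at h2
    nlinarith [h2]
  have hCS : P ^ 2 ≤ Sa * Sb := Finset.sum_mul_sq_le_sq_mul_sq _ _ _
  have hcSa : Sa < c ^ 2 := by nlinarith
  have hPce : P = -(A * c) := by linarith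
  have hP2 : A ^ 2 * c ^ 2 ≤ Sa * Sb := by
    have : P ^ 2 = A ^ 2 * c ^ 2 := by rw [hPce]; ring
    linarith [this ▸ hCS]
  nlinarith [mul_nonneg hSa0 (le_of_lt (sub_pos.mpr hSbA)),
    mul_pos (pow_pos hA0 2) (sub_pos.mpr hcSa)]
end

section
/- Let y = (ε + is, 𝐲) with ε, s ∈ ℝ and 𝐲 ∈ ℝ^{d-1}, and set y² = (ε+is)² + 𝐲·𝐲 ∈ ℂ. Then ε² ≤ |y²| ≤ |ε+is|² + 𝐲·𝐲. -/
/-! Writing `z = a + b i`, one has `‖z² + Y‖² = a⁴ + (Y - b²)² + 2a²(b² + Y)`, which is at least `a⁴`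
when `Y ≥ 0`; the upper bound is the triangle inequality. -/

namespace Complex

lemma normSq_sq_add_ofReal (z : ℂ) (Y : ℝ) :
    normSq (z ^ 2 + Y) = z.re ^ 4 + (Y - z.im ^ 2) ^ 2 + 2 * z.re ^ 2 * (z.im ^ 2 + Y) := by
  simp only [normSq_apply, sq, add_re, add_im, mul_re, mul_im, ofReal_re, ofReal_im]
  ring

lemma sq_re_le_norm_sq_add_ofReal (z : ℂ) {Y : ℝ} (hY : 0 ≤ Y) : z.re ^ 2 ≤ ‖z ^ 2 + Y‖ := by
  have h : (z.re ^ 2) ^ 2 ≤ ‖z ^ 2 + Y‖ ^ 2 := by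
    rw [Complex.sq_norm, normSq_sq_add_ofReal]
    nlinarith [sq_nonneg (Y - z.im ^ 2), sq_nonneg z.re, sq_nonneg z.im]
  exact (pow_le_pow_iff_left₀ (sq_nonneg _) (norm_nonneg _) two_ne_zero).mp h

lemma norm_sq_add_ofReal_le (z : ℂ) {Y : ℝ} (hY : 0 ≤ Y) : ‖z ^ 2 + Y‖ ≤ ‖z‖ ^ 2 + Y :=
  (norm_add_le _ _).trans_eq (by rw [norm_pow, Complex.norm_of_nonneg hY])

end Complex

/-- For y = (ε + is, 𝐲) with ε, s ∈ ℝ, 𝐲 ∈ ℝ^{d-1}, and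
y² = (ε+is)² + 𝐲·𝐲 ∈ ℂ, one has ε² ≤ |y²| ≤ |ε+is|² + 𝐲·𝐲. -/
theorem stmt_4 (n : ℕ) (ε s : ℝ) (y : Fin n → ℝ) :
    ε ^ 2 ≤ ‖((ε : ℂ) + Complex.I * (s : ℂ)) ^ 2 + ((∑ i, y i ^ 2 : ℝ) : ℂ)‖ ∧
      ‖((ε : ℂ) + Complex.I * (s : ℂ)) ^ 2 + ((∑ i, y i ^ 2 : ℝ) : ℂ)‖ ≤
        ‖(ε : ℂ) + Complex.I * (s : ℂ)‖ ^ 2 + ∑ i, y i ^ 2 := by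
  have hY : 0 ≤ ∑ i, y i ^ 2 := Finset.sum_nonneg fun i _ => sq_nonneg (y i)
  have hre : ((ε : ℂ) + Complex.I * s).re = ε := by simp
  refine ⟨?_, Complex.norm_sq_add_ofReal_le _ hY⟩
  simpa only [hre] using Complex.sq_re_le_norm_sq_add_ofReal ((ε : ℂ) + Complex.I * s) hY
end

section
/- Let ζ = ξ + iη ∈ ℂ^{1,d-1} with η in the open forward light cone (η⁰ > 0, η² < 0). Define ζ' = ζ/ζ² (which is well-defined since ζ² ≠ 0) and write ζ' = ξ' + iη'. Then η' is also in the open forward light cone. -/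
/-- If ζ = ξ + iη ∈ ℂ^{1,d-1} has η in the open forward light cone
(η⁰ > 0, η² < 0), then ζ² ≠ 0 and ζ' = ζ/ζ' satisfies: η' = Im ζ' is also in the
open forward light cone. Minkowski signature (-,+,...,+), complex bilinear square. -/
theorem stmt_5 (n : ℕ) (ζ0 : ℂ) (ζv : Fin n → ℂ)
    (hη0 : 0 < ζ0.im)
    (hη : -(ζ0.im) ^ 2 + ∑ i, (ζv i).im ^ 2 < 0) :
    (-ζ0 ^ 2 + ∑ i, (ζv i) ^ 2) ≠ 0 ∧
      0 < (ζ0 / (-ζ0 ^ 2 + ∑ i, (ζv i) ^ 2)).im ∧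
      -((ζ0 / (-ζ0 ^ 2 + ∑ i, (ζv i) ^ 2)).im) ^ 2 +
          ∑ i, ((ζv i / (-ζ0 ^ 2 + ∑ j, (ζv j) ^ 2)).im) ^ 2 < 0 := by
  set S : ℂ := -ζ0 ^ 2 + ∑ i, (ζv i) ^ 2 with hSdef
  set a : ℝ := ζ0.re with ha
  set b : ℝ := ζ0.im with hb
  set P : ℝ := ∑ i, (ζv i).re ^ 2 with hP
  set Q : ℝ := ∑ i, (ζv i).im ^ 2 with hQ
  set R : ℝ := ∑ i, (ζv i).re * (ζv i).im with hR
  have hP0 : 0 ≤ P := Finset.sum_nonneg fun i _ => sq_nonneg _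
  have hQ0 : 0 ≤ Q := Finset.sum_nonneg fun i _ => sq_nonneg _
  have hCS : R ^ 2 ≤ P * Q :=
    Finset.sum_mul_sq_le_sq_mul_sq _ (fun i => (ζv i).re) (fun i => (ζv i).im)
  have hQb : Q < b ^ 2 := by linarith
  have hA : S.re = -a ^ 2 + b ^ 2 + P - Q := by
    rw [hSdef, Complex.add_re, Complex.neg_re,
      show (ζ0 ^ 2).re = a ^ 2 - b ^ 2 from by rw [pow_two, Complex.mul_re]; ring,
      Complex.re_sum,
      Finset.sum_congr rfl (fun i _ =>
        show ((ζv i) ^ 2).re = (ζv i).re ^ 2 - (ζv i).im ^ 2 from by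
          rw [pow_two, Complex.mul_re]; ring),
      Finset.sum_sub_distrib]
    ring
  have hB : S.im = -(2 * a * b) + 2 * R := by
    rw [hSdef, Complex.add_im, Complex.neg_im,
      show (ζ0 ^ 2).im = 2 * a * b from by rw [pow_two, Complex.mul_im]; ring,
      Complex.im_sum,
      Finset.sum_congr rfl (fun i _ =>
        show ((ζv i) ^ 2).im = 2 * ((ζv i).re * (ζv i).im) from by
          rw [pow_two, Complex.mul_im]; ring),
      ← Finset.mul_sum]
  -- the pointwise Cauchy–Schwarz-type helper: ∑ (a·imᵢ − b·reᵢ)² ≥ 0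
  have hT : 0 ≤ a ^ 2 * Q - 2 * (a * b) * R + b ^ 2 * P := by
    have h := Finset.sum_nonneg (s := Finset.univ)
      (f := fun i => (a * (ζv i).im - b * (ζv i).re) ^ 2) (fun i _ => sq_nonneg _)
    have he : ∑ i, (a * (ζv i).im - b * (ζv i).re) ^ 2
        = a ^ 2 * Q - 2 * (a * b) * R + b ^ 2 * P := by
      rw [hP, hQ, hR, Finset.mul_sum, Finset.mul_sum, Finset.mul_sum,
        ← Finset.sum_sub_distrib, ← Finset.sum_add_distrib]
      exact Finset.sum_congr rfl fun i _ => by ring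
    linarith [he ▸ h]
  -- S ≠ 0
  have hN0 : 0 < S.re ^ 2 + S.im ^ 2 := by
    rcases lt_or_eq_of_le (add_nonneg (sq_nonneg S.re) (sq_nonneg S.im)) with h | h
    · linarith
    · exfalso
      have h1 : S.re = 0 := by nlinarith [sq_nonneg S.re, sq_nonneg S.im]
      have h2 : S.im = 0 := by nlinarith [sq_nonneg S.re, sq_nonneg S.im]
      rw [hA] at h1
      rw [hB] at h2
      have hRab : R = a * b := by linarith
      rw [hRab] at hCS
      have hbQ : 0 < b ^ 2 - Q := by linarith
      have hbP : 0 < b ^ 2 + P := by positivity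
      nlinarith [mul_pos hbQ hbP, sq_nonneg b, sq_nonneg a, mul_pos hη0 hη0]
  have hS0 : S ≠ 0 := by
    intro h
    rw [h] at hN0
    simp at hN0
  set N : ℝ := Complex.normSq S with hNdef
  have hNpos : 0 < N := Complex.normSq_pos.mpr hS0
  have hN : N = S.re ^ 2 + S.im ^ 2 := by rw [hNdef, Complex.normSq_apply]; ring
  -- key positivity: b * S.re − a * S.im > 0
  have hkey : 0 < b * S.re - a * S.im := by
    rw [hA, hB]
    nlinarith [hT, mul_pos hη0 hη0, sq_nonneg a, mul_pos (mul_pos hη0 hη0) (show (0:ℝ) < b ^ 2 - Q by linarith)]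
  have e1 : (ζ0 / S).im = (b * S.re - a * S.im) / N := by
    rw [Complex.div_im]; rw [← ha, ← hb, ← hNdef]; ring
  have e2 : ∀ i, (ζv i / S).im = ((ζv i).im * S.re - (ζv i).re * S.im) / N := by
    intro i
    rw [Complex.div_im]; rw [← hNdef]; ring
  refine ⟨hS0, ?_, ?_⟩
  · rw [e1]
    exact div_pos hkey hNpos
  · rw [e1]
    simp only [e2]
    have hsum2 : ∑ i, (((ζv i).im * S.re - (ζv i).re * S.im) / N) ^ 2
        = (S.re ^ 2 * Q - 2 * S.re * S.im * R + S.im ^ 2 * P) / N ^ 2 := by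
      rw [eq_div_iff (by positivity), Finset.sum_mul]
      rw [hP, hQ, hR, Finset.mul_sum, Finset.mul_sum, Finset.mul_sum,
        ← Finset.sum_sub_distrib, ← Finset.sum_add_distrib]
      refine Finset.sum_congr rfl fun i _ => ?_
      rw [div_pow, div_mul_cancel₀ _ (by positivity : (N:ℝ) ^ 2 ≠ 0)]
      ring
    rw [hsum2]
    have hid : -(b * S.re - a * S.im) ^ 2
        + (S.re ^ 2 * Q - 2 * S.re * S.im * R + S.im ^ 2 * P)
        = (-b ^ 2 + Q) * (S.re ^ 2 + S.im ^ 2) := by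
      rw [hA, hB]; ring
    have hcomb : -((b * S.re - a * S.im) / N) ^ 2
        + (S.re ^ 2 * Q - 2 * S.re * S.im * R + S.im ^ 2 * P) / N ^ 2
        = ((-b ^ 2 + Q) * (S.re ^ 2 + S.im ^ 2)) / N ^ 2 := by
      rw [← hid]; ring
    rw [hcomb]
    apply div_neg_of_neg_of_pos
    · apply mul_neg_of_neg_of_pos
      · linarith
      · linarith [hN ▸ hNpos]
    · positivity
end

section
/- For ζ = ξ + iη ∈ ℂ^{1,d-1} with η timelike, define S(ζ) = max(1/√(-η²), |ζ|), where |ζ|² = Σ_μ |ζ^μ|² is the Hermitian norm. If ζ' = ζ/ζ², then S(ζ') ≤ S(ζ)³. -/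
/-- The quantity S(ζ) = max(1/√(-η²), |ζ|), where η = Im ζ, η² is its Minkowski square
(signature (-,+,...,+)) and |ζ| is the Hermitian (Euclidean) norm of ζ ∈ ℂ^{1,n}. -/
noncomputable def Sfun (n : ℕ) (z0 : ℂ) (zv : Fin n → ℂ) : ℝ :=
  max (1 / Real.sqrt (-(-(z0.im) ^ 2 + ∑ i, (zv i).im ^ 2)))
    (Real.sqrt (‖z0‖ ^ 2 + ∑ i, ‖zv i‖ ^ 2))

/-!
Write `ζ = ξ + iη`, so that `ζ² = ξ² - η² + 2i ξ·η`. The complex Minkowski square satisfies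
`|ζ²| ≤ |ζ|²` by the triangle inequality, and `|ζ²| ≥ -η²` by the reverse Cauchy–Schwarz
inequality `(ξ·η)² ≥ ξ²η²` for timelike `η`. Inversion scales `|ζ|` by `1/|ζ²|` and `η²` by
`1/|ζ²|²`, so `S(ζ/ζ²) = max(|ζ²|/√(-η²), |ζ|/|ζ²|)`; both entries are at most `S(ζ)³` because
`|ζ²| ≤ |ζ|² ≤ S(ζ)²` and `1/|ζ²| ≤ 1/(-η²) ≤ S(ζ)²`.
-/

open Finset Complex

variable {ι : Type*} [Fintype ι]

def minkowskiInner {R : Type*} [CommRing R] (x₀ : R) (x : ι → R) (y₀ : R) (y : ι → R) : R :=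
  -(x₀ * y₀) + ∑ i, x i * y i

theorem minkowskiInner_self {R : Type*} [CommRing R] (x₀ : R) (x : ι → R) :
    minkowskiInner x₀ x x₀ x = -x₀ ^ 2 + ∑ i, x i ^ 2 := by
  simp only [minkowskiInner, sq]

theorem minkowskiInner_self_sub_mul_div (x₀ y₀ p q r : ℝ) (x y : ι → ℝ) :
    minkowskiInner ((p * y₀ - q * x₀) / r) (fun i => (p * y i - q * x i) / r)
        ((p * y₀ - q * x₀) / r) (fun i => (p * y i - q * x i) / r) =
      (p ^ 2 * minkowskiInner y₀ y y₀ y - 2 * p * q * minkowskiInner x₀ x y₀ y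
        + q ^ 2 * minkowskiInner x₀ x x₀ x) / r ^ 2 := by
  have hsum : ∑ i, (p * y i - q * x i) / r * ((p * y i - q * x i) / r) =
      (p ^ 2 * ∑ i, y i * y i - 2 * p * q * ∑ i, x i * y i + q ^ 2 * ∑ i, x i * x i) / r ^ 2 := by
    simp only [mul_sum, ← sum_sub_distrib, ← sum_add_distrib, sum_div]
    exact sum_congr rfl fun i _ => by ring
  simp only [minkowskiInner, hsum]
  ring

theorem minkowskiInner_mul_le_sq_of_timelike (x₀ y₀ : ℝ) (x y : ι → ℝ)
    (hy : minkowskiInner y₀ y y₀ y < 0) :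
    minkowskiInner x₀ x x₀ x * minkowskiInner y₀ y y₀ y ≤ minkowskiInner x₀ x y₀ y ^ 2 := by
  have hCS := sum_mul_sq_le_sq_mul_sq univ x y
  have hA : 0 ≤ ∑ i, x i ^ 2 := by positivity
  have hB : 0 ≤ ∑ i, y i ^ 2 := by positivity
  rw [minkowskiInner_self] at hy ⊢
  rw [minkowskiInner_self, minkowskiInner]
  generalize ∑ i, x i ^ 2 = A, ∑ i, y i ^ 2 = B, ∑ i, x i * y i = C at *
  rcases hB.eq_or_lt with rfl | hB
  · obtain rfl : C = 0 := by nlinarith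
    nlinarith
  have key : B * ((-(x₀ * y₀) + C) ^ 2 - (-x₀ ^ 2 + A) * (-y₀ ^ 2 + B)) =
      (x₀ * B - y₀ * C) ^ 2 + (y₀ ^ 2 - B) * (A * B - C ^ 2) := by ring
  have : 0 ≤ (x₀ * B - y₀ * C) ^ 2 + (y₀ ^ 2 - B) * (A * B - C ^ 2) :=
    add_nonneg (sq_nonneg _) (mul_nonneg (by linarith) (sub_nonneg.2 hCS))
  exact sub_nonneg.1 (nonneg_of_mul_nonneg_right (key ▸ this) hB)

section Complex

variable (ζ₀ : ℂ) (ζ : ι → ℂ)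

theorem re_minkowskiInner_self :
    (minkowskiInner ζ₀ ζ ζ₀ ζ).re =
      minkowskiInner ζ₀.re (re ∘ ζ) ζ₀.re (re ∘ ζ)
        - minkowskiInner ζ₀.im (im ∘ ζ) ζ₀.im (im ∘ ζ) := by
  simp only [minkowskiInner, add_re, neg_re, mul_re, re_sum, Function.comp_apply, sum_sub_distrib]
  ring

theorem im_minkowskiInner_self : (minkowskiInner ζ₀ ζ ζ₀ ζ).im =
    2 * minkowskiInner ζ₀.re (re ∘ ζ) ζ₀.im (im ∘ ζ) := by
  simp only [minkowskiInner, add_im, neg_im, mul_im, im_sum, Function.comp_apply, mul_add, mul_sum]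
  ring_nf

theorem norm_minkowskiInner_self_le : ‖minkowskiInner ζ₀ ζ ζ₀ ζ‖ ≤ ‖ζ₀‖ ^ 2 + ∑ i, ‖ζ i‖ ^ 2 :=
  calc ‖minkowskiInner ζ₀ ζ ζ₀ ζ‖ ≤ ‖ζ₀ * ζ₀‖ + ∑ i, ‖ζ i * ζ i‖ := by
        refine (norm_add_le _ _).trans ?_
        rw [norm_neg]
        gcongr
        exact norm_sum_le _ _
    _ = ‖ζ₀‖ ^ 2 + ∑ i, ‖ζ i‖ ^ 2 := by simp only [norm_mul, sq]

/-- `Im (z / w) = (Re w • Im z - Im w • Re z) / |w|²`, and for `w = ζ²` the Minkowski square of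
`Re w • η - Im w • ξ` is `η² |w|²`. -/
theorem im_div_minkowskiInner_self :
    let w := minkowskiInner ζ₀ ζ ζ₀ ζ
    minkowskiInner (ζ₀ / w).im (fun i => (ζ i / w).im) (ζ₀ / w).im (fun i => (ζ i / w).im) =
      minkowskiInner ζ₀.im (im ∘ ζ) ζ₀.im (im ∘ ζ) / normSq w := by
  intro w
  have him : ∀ z : ℂ, (z / w).im = (w.re * z.im - w.im * z.re) / normSq w := by
    intro z; rw [div_im]; ring
  have hN : normSq w = w.re ^ 2 + w.im ^ 2 := by rw [normSq_apply]; ring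
  simp only [him]
  refine (minkowskiInner_self_sub_mul_div ζ₀.re ζ₀.im _ _ _ (re ∘ ζ) (im ∘ ζ)).trans ?_
  rcases eq_or_ne (normSq w) 0 with h | h
  · simp [h]
  rw [hN] at h ⊢
  field_simp
  rw [re_minkowskiInner_self, im_minkowskiInner_self]
  ring

theorem neg_minkowskiInner_im_le_norm (hη : minkowskiInner ζ₀.im (im ∘ ζ) ζ₀.im (im ∘ ζ) < 0) :
    -minkowskiInner ζ₀.im (im ∘ ζ) ζ₀.im (im ∘ ζ) ≤ ‖minkowskiInner ζ₀ ζ ζ₀ ζ‖ := by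
  have hCS := minkowskiInner_mul_le_sq_of_timelike ζ₀.re ζ₀.im (re ∘ ζ) (im ∘ ζ) hη
  have hsq : minkowskiInner ζ₀.im (im ∘ ζ) ζ₀.im (im ∘ ζ) ^ 2 ≤ ‖minkowskiInner ζ₀ ζ ζ₀ ζ‖ ^ 2 := by
    -- `|ζ²|² - (η²)² = ξ²(ξ² - 2η²) + 4(ξ·η)²`; when `ξ² < 0` reverse Cauchy–Schwarz bounds
    -- this below by `ξ²(ξ² + 2η²) ≥ 0`.
    rw [Complex.sq_norm, normSq_apply, re_minkowskiInner_self, im_minkowskiInner_self]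
    set a := minkowskiInner ζ₀.re (re ∘ ζ) ζ₀.re (re ∘ ζ)
    set b := minkowskiInner ζ₀.im (im ∘ ζ) ζ₀.im (im ∘ ζ)
    set c := minkowskiInner ζ₀.re (re ∘ ζ) ζ₀.im (im ∘ ζ)
    rcases le_or_gt 0 a with ha | ha
    · nlinarith [sq_nonneg c]
    · nlinarith
  rwa [← neg_sq, pow_le_pow_iff_left₀ (by linarith) (norm_nonneg _) two_ne_zero] at hsq

end Complex

theorem Sfun_eq_max_minkowskiInner (n : ℕ) (ζ₀ : ℂ) (ζ : Fin n → ℂ) :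
    Sfun n ζ₀ ζ = max (1 / √(-minkowskiInner ζ₀.im (im ∘ ζ) ζ₀.im (im ∘ ζ)))
      (√(‖ζ₀‖ ^ 2 + ∑ i, ‖ζ i‖ ^ 2)) := by
  rw [Sfun, minkowskiInner_self]
  rfl

theorem Sfun_div_minkowskiInner_self (n : ℕ) (ζ₀ : ℂ) (ζ : Fin n → ℂ) :
    let w := minkowskiInner ζ₀ ζ ζ₀ ζ
    Sfun n (ζ₀ / w) (fun i => ζ i / w) =
      max (‖w‖ / √(-minkowskiInner ζ₀.im (im ∘ ζ) ζ₀.im (im ∘ ζ)))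
        (√(‖ζ₀‖ ^ 2 + ∑ i, ‖ζ i‖ ^ 2) / ‖w‖) := by
  intro w
  have hnorm : ∀ z : ℂ, ‖z / w‖ ^ 2 = ‖z‖ ^ 2 / normSq w := by
    intro z; rw [norm_div, div_pow, Complex.sq_norm w]
  rw [Sfun, ← minkowskiInner_self, im_div_minkowskiInner_self]
  simp only [hnorm, ← sum_div, ← add_div, ← neg_div]
  rw [Real.sqrt_div' _ (normSq_nonneg w), Real.sqrt_div' _ (normSq_nonneg w), one_div_div,
    ← norm_def]

theorem max_div_le_pow_three {t m e : ℝ} (ht : 0 < t) (htm : t ≤ m) (hme : m ≤ e) :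
    max (m / √t) (√e / m) ≤ max (1 / √t) (√e) ^ 3 := by
  set S := max (1 / √t) (√e)
  have hS₁ : 1 / √t ≤ S := le_max_left _ _
  have hS₂ : √e ≤ S := le_max_right _ _
  have he : e ≤ S ^ 2 := by
    rw [← Real.sq_sqrt (ht.le.trans (htm.trans hme))]
    gcongr
  have hm : 1 / m ≤ (1 / √t) ^ 2 := by
    rw [div_pow, Real.sq_sqrt ht.le, one_pow]
    gcongr
  have hS : 0 ≤ S := (Real.sqrt_nonneg e).trans hS₂
  refine max_le ?_ ?_
  · calc m / √t = m * (1 / √t) := by ring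
      _ ≤ S ^ 2 * S := by gcongr; linarith
      _ = S ^ 3 := by ring
  · calc √e / m = √e * (1 / m) := by ring
      _ ≤ S * S ^ 2 := mul_le_mul hS₂ (hm.trans (by gcongr))
          (one_div_pos.2 (ht.trans_le htm)).le hS
      _ = S ^ 3 := by ring

/-- If η = Im ζ is timelike and ζ' = ζ/ζ² (complex Minkowski square), then
S(ζ') ≤ S(ζ)³. -/
theorem stmt_7 (n : ℕ) (ζ0 : ℂ) (ζv : Fin n → ℂ)
    (hη : -(ζ0.im) ^ 2 + ∑ i, (ζv i).im ^ 2 < 0) :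
    Sfun n (ζ0 / (-ζ0 ^ 2 + ∑ i, (ζv i) ^ 2))
        (fun i => ζv i / (-ζ0 ^ 2 + ∑ j, (ζv j) ^ 2)) ≤ (Sfun n ζ0 ζv) ^ 3 := by
  rw [← minkowskiInner_self] at hη ⊢
  rw [Sfun_div_minkowskiInner_self, Sfun_eq_max_minkowskiInner]
  exact max_div_le_pow_three (neg_pos.2 hη) (neg_minkowskiInner_im_le_norm ζ0 ζv hη)
    (norm_minkowskiInner_self_le ζ0 ζv)
end

section
/- Let ρ ∈ ℂ with |ρ| < 1 and define z = 4ρ/(1+ρ)². Then z ∉ [1, +∞). Conversely if z ∈ ℂ \ [1, +∞) then ρ = z/(1+√(1-z))² (principal square root) satisfies |ρ| < 1 and 4ρ/(1+ρ)² = z. -/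
/-!
The Cayley transform `ρ ↦ (1 - ρ) / (1 + ρ)` is an involution exchanging the unit disc and the
right half-plane, and `1 - 4ρ / (1 + ρ)² = ((1 - ρ) / (1 + ρ))²`. Squaring maps the right
half-plane onto the slit plane `ℂ \ (-∞, 0]`, with the principal square root as inverse, so
`ρ ↦ 4ρ / (1 + ρ)²` is a bijection from the disc onto `ℂ \ [1, ∞)` inverted by
`z ↦ (1 - √(1 - z)) / (1 + √(1 - z)) = z / (1 + √(1 - z))²`.
-/

namespace Complex

noncomputable def cayley (ρ : ℂ) : ℂ := (1 - ρ) / (1 + ρ)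

theorem cayley_cayley {s : ℂ} (hs : 1 + s ≠ 0) : cayley (cayley s) = s := by
  unfold cayley
  field_simp
  ring

theorem re_cayley (ρ : ℂ) : (cayley ρ).re = (1 - ‖ρ‖ ^ 2) / ‖1 + ρ‖ ^ 2 := by
  rw [cayley, div_re, ← add_div, Complex.sq_norm, Complex.sq_norm, normSq_apply, normSq_apply]
  simp only [sub_re, add_re, sub_im, add_im, one_re, one_im]
  ring_nf

theorem re_cayley_pos_iff {ρ : ℂ} : 0 < (cayley ρ).re ↔ ‖ρ‖ < 1 := by
  rcases eq_or_ne (1 + ρ) 0 with h | h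
  · obtain rfl : ρ = -1 := by linear_combination h
    simp [cayley]
  · rw [re_cayley, div_pos_iff_of_pos_right (by positivity), sub_pos,
      sq_lt_one_iff₀ (norm_nonneg ρ)]

theorem one_add_ne_zero_of_re_pos {s : ℂ} (hs : 0 < s.re) : 1 + s ≠ 0 := by
  intro h
  have := congrArg re h
  simp only [add_re, one_re, zero_re] at this
  linarith

theorem one_add_ne_zero_of_norm_lt_one {ρ : ℂ} (hρ : ‖ρ‖ < 1) : 1 + ρ ≠ 0 :=
  slitPlane_ne_zero (mem_slitPlane_of_norm_lt_one hρ)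

theorem norm_cayley_lt_one {s : ℂ} (hs : 0 < s.re) : ‖cayley s‖ < 1 := by
  rwa [← re_cayley_pos_iff, cayley_cayley (one_add_ne_zero_of_re_pos hs)]

theorem one_sub_cayley_sq {ρ : ℂ} (h : 1 + ρ ≠ 0) :
    1 - cayley ρ ^ 2 = 4 * ρ / (1 + ρ) ^ 2 := by
  unfold cayley
  field_simp
  ring

theorem div_one_add_sq_eq_cayley {s z : ℂ} (hs : s ^ 2 = 1 - z) (h : 1 + s ≠ 0) :
    z / (1 + s) ^ 2 = cayley s := by
  rw [cayley, div_eq_div_iff (pow_ne_zero 2 h) h]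
  linear_combination (1 + s) * hs

theorem sq_mem_slitPlane_of_re_pos {u : ℂ} (hu : 0 < u.re) : u ^ 2 ∈ slitPlane := by
  rw [mem_slitPlane_iff, sq, mul_re, mul_im]
  by_cases him : u.im = 0
  · left
    rw [him]
    nlinarith
  · right
    have := mul_ne_zero hu.ne' him
    contrapose! this
    linarith

theorem re_cpow_one_div_two_pos {w : ℂ} (hw : w ∈ slitPlane) : 0 < (w ^ (1 / 2 : ℂ)).re := by
  rw [one_div, cpow_inv_two_re, Real.sqrt_pos]
  refine half_pos ?_
  rcases mem_slitPlane_iff.1 hw with hre | him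
  · linarith [norm_nonneg w]
  · linarith [neg_abs_le w.re, abs_re_lt_norm.2 him]

theorem cpow_one_div_two_sq (w : ℂ) : (w ^ (1 / 2 : ℂ)) ^ 2 = w := by
  rw [one_div, cpow_ofNat_inv_pow]

theorem one_sub_mem_slitPlane_iff {z : ℂ} :
    1 - z ∈ slitPlane ↔ ¬(z.im = 0 ∧ 1 ≤ z.re) := by
  rw [mem_slitPlane_iff, sub_re, sub_im, one_re, one_im, sub_pos, zero_sub, neg_ne_zero,
    not_and_or, not_le, or_comm, ne_eq]

end Complex

/-- If |ρ| < 1 then z = 4ρ/(1+ρ)² is not in [1,∞). Conversely, if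
z ∈ ℂ \ [1,∞) then ρ = z/(1+√(1-z))² (principal square root) satisfies |ρ| < 1 and
4ρ/(1+ρ)² = z. -/
theorem stmt_11 :
    (∀ ρ : ℂ, ‖ρ‖ < 1 →
        ¬((4 * ρ / (1 + ρ) ^ 2).im = 0 ∧ 1 ≤ (4 * ρ / (1 + ρ) ^ 2).re)) ∧
      ∀ z : ℂ, ¬(z.im = 0 ∧ 1 ≤ z.re) →
        ‖z / (1 + (1 - z) ^ ((1 : ℂ) / 2)) ^ 2‖ < 1 ∧
          4 * (z / (1 + (1 - z) ^ ((1 : ℂ) / 2)) ^ 2) /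
              (1 + z / (1 + (1 - z) ^ ((1 : ℂ) / 2)) ^ 2) ^ 2 = z := by
  constructor
  · intro ρ hρ
    rw [← Complex.one_sub_mem_slitPlane_iff,
      ← Complex.one_sub_cayley_sq (Complex.one_add_ne_zero_of_norm_lt_one hρ), sub_sub_cancel]
    exact Complex.sq_mem_slitPlane_of_re_pos (Complex.re_cayley_pos_iff.2 hρ)
  · intro z hz
    set s := (1 - z) ^ ((1 : ℂ) / 2)
    have hs : 0 < s.re :=
      Complex.re_cpow_one_div_two_pos (Complex.one_sub_mem_slitPlane_iff.2 hz)
    have hs₁ : 1 + s ≠ 0 := Complex.one_add_ne_zero_of_re_pos hs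
    rw [Complex.div_one_add_sq_eq_cayley (Complex.cpow_one_div_two_sq (1 - z)) hs₁]
    have hρ := Complex.norm_cayley_lt_one hs
    refine ⟨hρ, ?_⟩
    rw [← Complex.one_sub_cayley_sq (Complex.one_add_ne_zero_of_norm_lt_one hρ),
      Complex.cayley_cayley hs₁, Complex.cpow_one_div_two_sq, sub_sub_cancel]
end

section
/- Let (p_n)_{n≥0} be nonnegative reals and 0 ≤ r < 1 such that g(r) := Σ_n p_n r^{δ_n} < ∞ for a discrete increasing sequence of exponents δ_n ≥ 0 with δ_n → ∞. If g(r) ≤ C(1-r)^{-α} for all r ∈ [0,1) with constants C, α > 0, then for every Δ* ≥ 1 the tail satisfies Σ_{δ_n ≥ Δ*} p_n r^{δ_n} ≤ C' r^{Δ*} (1/log(1/r) + Δ*)^α for all r ∈ (0,1), with C' depending only on C and α. -/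
open Filter

/-- Discrete tauberian tail bound. Let p_n ≥ 0 and δ_n ≥ 0 a strictly
increasing sequence of exponents tending to ∞, with g(r) = Σ p_n r^{δ_n} convergent for
all r ∈ [0,1) and bounded by C(1-r)^{-α}. Then there is C' > 0 (depending only on C, α)
such that for all Δ* ≥ 1 and r ∈ (0,1),
Σ_{δ_n ≥ Δ*} p_n r^{δ_n} ≤ C' r^{Δ*} (1/log(1/r) + Δ*)^α. -/
theorem stmt_15 (p δ : ℕ → ℝ) (hp : ∀ n, 0 ≤ p n) (hδ0 : ∀ n, 0 ≤ δ n)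
    (hδmono : StrictMono δ) (hδtop : Tendsto δ atTop atTop)
    (C α : ℝ) (hC : 0 < C) (hα : 0 < α)
    (hsum : ∀ r : ℝ, 0 ≤ r → r < 1 → Summable (fun n => p n * r ^ δ n))
    (hbound : ∀ r : ℝ, 0 ≤ r → r < 1 → ∑' n, p n * r ^ δ n ≤ C * (1 - r) ^ (-α)) :
    ∃ C' : ℝ, 0 < C' ∧ ∀ Δstar r : ℝ, 1 ≤ Δstar → 0 < r → r < 1 →
      ∑' n : {n : ℕ // Δstar ≤ δ n}, p n.1 * r ^ δ n.1 ≤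
        C' * r ^ Δstar * (1 / Real.log (1 / r) + Δstar) ^ α := by
  refine ⟨C * Real.exp 1 * Real.exp α, by positivity, ?_⟩
  intro Δ r hΔ hr0 hr1
  set t := Real.log (1 / r) with ht
  have ht0 : 0 < t := Real.log_pos (one_lt_one_div hr0 hr1)
  have hΔ0 : (0:ℝ) < Δ := lt_of_lt_of_le one_pos hΔ
  set ε : ℝ := t / (1 + t * Δ) with hε
  have hden : (0:ℝ) < 1 + t * Δ := by positivity
  have hε0 : 0 < ε := div_pos ht0 hden
  have hεt : ε < t := by
    rw [hε]
    exact div_lt_self ht0 (by nlinarith)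
  have hεΔ : ε * Δ ≤ 1 := by
    rw [hε, div_mul_eq_mul_div, div_le_one hden]
    nlinarith
  have hε1 : ε ≤ 1 := by nlinarith
  set s : ℝ := Real.exp (-ε) with hs
  have hs0 : 0 < s := Real.exp_pos _
  have hs1 : s < 1 := Real.exp_lt_one_iff.mpr (by linarith)
  have hrexp : r = Real.exp (-t) := by
    rw [ht, one_div, Real.log_inv, neg_neg, Real.exp_log hr0]
  have hrs : r < s := by
    rw [hrexp, hs]; exact Real.exp_lt_exp.mpr (by linarith)
  -- main comparison: tail sum ≤ (r/s)^Δ * g(s)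
  have hrs' : 0 < r / s := div_pos hr0 hs0
  have hrs1 : r / s < 1 := (div_lt_one hs0).mpr hrs
  have key : ∀ n, Δ ≤ δ n → p n * r ^ δ n ≤ (r / s) ^ Δ * (p n * s ^ δ n) := by
    intro n hn
    have h1 : r ^ δ n = (r / s) ^ δ n * s ^ δ n := by
      rw [← Real.mul_rpow (le_of_lt hrs') hs0.le, div_mul_cancel₀]
      exact ne_of_gt hs0
    have h2 : (r / s) ^ δ n ≤ (r / s) ^ Δ :=
      Real.rpow_le_rpow_of_exponent_ge hrs' hrs1.le hn
    calc p n * r ^ δ n = (r / s) ^ δ n * (p n * s ^ δ n) := by rw [h1]; ring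
      _ ≤ (r / s) ^ Δ * (p n * s ^ δ n) := by
          apply mul_le_mul_of_nonneg_right h2
          exact mul_nonneg (hp n) (Real.rpow_nonneg hs0.le _)
  have hsum_s : Summable (fun n => p n * s ^ δ n) := hsum s hs0.le hs1
  have hsum_g : Summable (fun n => (r / s) ^ Δ * (p n * s ^ δ n)) := hsum_s.mul_left _
  -- convert subtype tsum to indicator tsum
  have hset : {n : ℕ | Δ ≤ δ n}.indicator (fun n => p n * r ^ δ n) ≤
      fun n => (r / s) ^ Δ * (p n * s ^ δ n) := by
    intro n
    by_cases hn : Δ ≤ δ n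
    · simp only [Set.indicator_apply, Set.mem_setOf_eq, if_pos hn]
      exact key n hn
    · simp only [Set.indicator_apply, Set.mem_setOf_eq, if_neg hn]
      exact mul_nonneg (Real.rpow_nonneg (le_of_lt hrs') _)
        (mul_nonneg (hp n) (Real.rpow_nonneg hs0.le _))
  have hsum_ind : Summable ({n : ℕ | Δ ≤ δ n}.indicator (fun n => p n * r ^ δ n)) :=
    (hsum r hr0.le hr1).indicator _
  have step1 : ∑' n : {n : ℕ // Δ ≤ δ n}, p n.1 * r ^ δ n.1 ≤
      (r / s) ^ Δ * ∑' n, p n * s ^ δ n := by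
    rw [show ∑' n : {n : ℕ // Δ ≤ δ n}, p n.1 * r ^ δ n.1
        = ∑' n, {n : ℕ | Δ ≤ δ n}.indicator (fun n => p n * r ^ δ n) n from
        tsum_subtype {n : ℕ | Δ ≤ δ n} (fun n => p n * r ^ δ n), ← tsum_mul_left]
    exact Summable.tsum_le_tsum hset hsum_ind hsum_g
  have step2 : ∑' n, p n * s ^ δ n ≤ C * (1 - s) ^ (-α) := hbound s hs0.le hs1
  -- bound (r/s)^Δ
  have hsΔ : (r / s) ^ Δ = r ^ Δ * Real.exp (ε * Δ) := by
    rw [Real.div_rpow hr0.le hs0.le, hs, ← Real.exp_mul, neg_mul, Real.exp_neg,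
      div_eq_mul_inv, inv_inv]
  have hexpε : Real.exp (ε * Δ) ≤ Real.exp 1 := Real.exp_le_exp.mpr hεΔ
  -- bound (1-s)^{-α}
  have h1s : ε * Real.exp (-1) ≤ 1 - s := by
    have h1 : ε + 1 ≤ Real.exp ε := Real.add_one_le_exp ε
    have h2 : ε * Real.exp (-ε) ≤ 1 - Real.exp (-ε) := by
      have := mul_le_mul_of_nonneg_right h1 (Real.exp_pos (-ε)).le
      rw [add_mul, ← Real.exp_add, add_neg_cancel, Real.exp_zero, one_mul] at this
      linarith
    have h3 : Real.exp (-1) ≤ Real.exp (-ε) := Real.exp_le_exp.mpr (by linarith)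
    calc ε * Real.exp (-1) ≤ ε * Real.exp (-ε) :=
          mul_le_mul_of_nonneg_left h3 hε0.le
      _ ≤ 1 - Real.exp (-ε) := h2
      _ = 1 - s := by rw [hs]
  have hεe0 : 0 < ε * Real.exp (-1) := by positivity
  have h1s0 : 0 < 1 - s := lt_of_lt_of_le hεe0 h1s
  have hbase : (1 - s) ^ (-α) ≤ (ε * Real.exp (-1)) ^ (-α) := by
    rw [Real.rpow_neg h1s0.le, Real.rpow_neg hεe0.le]
    apply inv_anti₀ (Real.rpow_pos_of_pos hεe0 α)
    exact Real.rpow_le_rpow hεe0.le h1s hα.le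
  have hεinv : ε⁻¹ = 1 / t + Δ := by
    rw [hε]
    field_simp
  have hcalc : (ε * Real.exp (-1)) ^ (-α) = Real.exp α * (1 / t + Δ) ^ α := by
    rw [Real.mul_rpow hε0.le (Real.exp_pos _).le, ← Real.exp_mul,
      Real.rpow_neg hε0.le, ← Real.inv_rpow hε0.le, hεinv, neg_mul_neg, one_mul]
    ring
  have hpos1 : 0 ≤ (1 / t + Δ) ^ α := Real.rpow_nonneg (by positivity) _
  calc ∑' n : {n : ℕ // Δ ≤ δ n}, p n.1 * r ^ δ n.1
      ≤ (r / s) ^ Δ * ∑' n, p n * s ^ δ n := step1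
    _ ≤ (r / s) ^ Δ * (C * (1 - s) ^ (-α)) := by
        apply mul_le_mul_of_nonneg_left step2 (Real.rpow_nonneg hrs'.le _)
    _ = r ^ Δ * Real.exp (ε * Δ) * (C * (1 - s) ^ (-α)) := by rw [hsΔ]
    _ ≤ r ^ Δ * Real.exp 1 * (C * (Real.exp α * (1 / t + Δ) ^ α)) := by
        apply mul_le_mul
        · exact mul_le_mul_of_nonneg_left hexpε (Real.rpow_nonneg hr0.le _)
        · rw [← hcalc]
          exact mul_le_mul_of_nonneg_left hbase hC.le
        · positivity
        · positivity
    _ = C * Real.exp 1 * Real.exp α * r ^ Δ * (1 / t + Δ) ^ α := by ring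
end
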